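/- Let r ∈ {2,3} and suppose ω is a 1r-path from 𝐫 to 𝟏 (every configuration along ω takes spin values only in {1,r}). Then: (a) the height of ω satisfies Φ_ω ≥ H(𝟐) + Γ*; and (b) if Φ_ω = H(𝟐) + Γ*, then ω intersects the critical set W(𝐫,𝟏). -/

import Mathlib

namespace GenPotts

/-- Spin values: `0` represents spin `1`, `1` represents spin `2`, `2` represents spin `3`. -/
abbrev Spin := Fin 3

/-- Vertices of the two-dimensional discrete torus. -/
abbrev Vtx (K L : ℕ) := ZMod K × ZMod L

/-- Spin configurations. -/
abbrev Config (K L : ℕ) := Vtx K L → Spin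

section Defs

variable (K L : ℕ)

/-- The constant configuration with all spins equal to `r`. -/
def const (r : Spin) : Config K L := fun _ => r

variable [NeZero K] [NeZero L]

/-- The number of (unordered nearest-neighbour) edges of the torus whose endpoint spins are
`i` and `j`.  Each edge is represented exactly once as a pair (vertex, direction), where the
direction `true` points right and `false` points up. -/
def nEdge (σ : Config K L) (i j : Spin) : ℕ :=
  ((Finset.univ : Finset (Vtx K L × Bool)).filter (fun p =>
    (σ p.1 = i ∧ σ (if p.2 then (p.1.1 + 1, p.1.2) else (p.1.1, p.1.2 + 1)) = j) ∨
    (σ p.1 = j ∧ σ (if p.2 then (p.1.1 + 1, p.1.2) else (p.1.1, p.1.2 + 1)) = i))).card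

/-- The number of vertices with spin `i`. -/
def nVtx (σ : Config K L) (i : Spin) : ℕ :=
  ((Finset.univ : Finset (Vtx K L)).filter (fun v => σ v = i)).card

end Defs

/-- The coupling constants of the generalized Potts model. -/
structure Couplings where
  J11 : ℝ
  J22 : ℝ
  J33 : ℝ
  J12 : ℝ
  J13 : ℝ
  J23 : ℝ

namespace Couplings

def γ1 (C : Couplings) : ℝ := C.J11 - C.J22
def γ12 (C : Couplings) : ℝ := C.J12 + C.J22
def γ23 (C : Couplings) : ℝ := C.J23 + C.J22

end Couplings

/-- The Hamiltonian of the generalized three-state Potts model. -/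
noncomputable def H (K L : ℕ) [NeZero K] [NeZero L] (C : Couplings) (σ : Config K L) : ℝ :=
  -(C.J11 * nEdge K L σ 0 0 + C.J22 * nEdge K L σ 1 1 + C.J33 * nEdge K L σ 2 2)
    + C.J12 * nEdge K L σ 0 1 + C.J13 * nEdge K L σ 0 2 + C.J23 * nEdge K L σ 1 2

/-- The auxiliary function `f_h`. -/
noncomputable def fh (h x : ℝ) : ℝ :=
  4 * (x + h / 2) * (⌈(x + h / 2) / h⌉ : ℝ)
    - 2 * h * ((⌈(x + h / 2) / h⌉ : ℝ) ^ 2 - (⌈(x + h / 2) / h⌉ : ℝ) + 1)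

/-- The critical length `ℓ*`. -/
noncomputable def lstar (C : Couplings) : ℕ := ⌈(2 * C.γ12 + C.γ1) / (2 * C.γ1)⌉₊

/-- The critical energy barrier `Γ*`. -/
noncomputable def Γstar (C : Couplings) : ℝ := fh C.γ1 C.γ12

/-- The standing assumptions on the lattice sizes and the coupling constants. -/
structure Admissible (K L : ℕ) (C : Couplings) : Prop where
  hKL : K ≤ L
  hK : 2 * lstar C ^ 2 ≤ K
  pos11 : 0 < C.J11
  pos22 : 0 < C.J22
  pos33 : 0 < C.J33
  pos12 : 0 < C.J12
  pos13 : 0 < C.J13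
  pos23 : 0 < C.J23
  h1122 : C.J22 < C.J11
  h2233 : C.J22 = C.J33
  h1213 : C.J12 = C.J13
  hA : ∀ n : ℤ, (2 * C.γ12 + C.γ1) / (2 * C.γ1) ≠ (n : ℝ)
  hB : fh C.γ1 C.γ12 = 2 * (K + 1) * C.γ23
  hC : 4 * C.γ23 + C.γ1 ≤ 2 * C.γ12

section Paths

variable (K L : ℕ) [NeZero K] [NeZero L]

/-- Two configurations differ at exactly one vertex. -/
def SingleFlip (σ σ' : Config K L) : Prop :=
  ∃ v, σ v ≠ σ' v ∧ ∀ w, w ≠ v → σ w = σ' w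

/-- A path: a finite sequence of configurations in which consecutive configurations differ
at exactly one vertex. -/
structure Path where
  len : ℕ
  toFun : ℕ → Config K L
  step : ∀ n, n < len → SingleFlip K L (toFun n) (toFun (n + 1))

/-- The height of a path: the maximum of `H` along it. -/
noncomputable def Path.height {K L : ℕ} [NeZero K] [NeZero L] (ω : Path K L)
    (C : Couplings) : ℝ :=
  Finset.sup' (Finset.range (ω.len + 1))
    (Finset.nonempty_range_iff.mpr (Nat.succ_ne_zero _))
    (fun n => H K L C (ω.toFun n))

/-- The path goes from `σ` to `σ'`. -/
def Path.FromTo {K L : ℕ} [NeZero K] [NeZero L] (ω : Path K L)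
    (σ σ' : Config K L) : Prop :=
  ω.toFun 0 = σ ∧ ω.toFun ω.len = σ'

/-- A path is an `ij`-path if every configuration along it has all spins in `{i, j}`. -/
def Path.OnlySpins {K L : ℕ} [NeZero K] [NeZero L] (ω : Path K L) (i j : Spin) : Prop :=
  ∀ n ≤ ω.len, ∀ v, ω.toFun n v = i ∨ ω.toFun n v = j

/-- The communication height `Φ(σ, σ')`: the minimal height over paths from `σ` to `σ'`. -/
noncomputable def Phi (C : Couplings) (σ σ' : Config K L) : ℝ :=
  sInf {x | ∃ ω : Path K L, ω.FromTo σ σ' ∧ ω.height C = x}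

/-- The communication height `Φ(σ, A)` between `σ` and a set `A`. -/
noncomputable def PhiSet (C : Couplings) (σ : Config K L) (A : Set (Config K L)) : ℝ :=
  sInf {x | ∃ ω : Path K L, ω.toFun 0 = σ ∧ ω.toFun ω.len ∈ A ∧ ω.height C = x}

/-- The energy barrier `Γ(σ, σ') = Φ(σ, σ') − H(σ)`. -/
noncomputable def Gamma (C : Couplings) (σ σ' : Config K L) : ℝ :=
  Phi K L C σ σ' - H K L C σ

/-- The stability level `V_σ = Φ(σ, I_σ) − H(σ)` where `I_σ = {η : H(η) < H(σ)}`. -/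
noncomputable def stabLevel (C : Couplings) (σ : Config K L) : ℝ :=
  PhiSet K L C σ {η | H K L C η < H K L C σ} - H K L C σ

/-- The set `X^s` of global minimizers of `H`. -/
def Xs (C : Couplings) : Set (Config K L) :=
  {σ | ∀ η, H K L C σ ≤ H K L C η}

/-- The set `X^m` of metastable configurations. -/
noncomputable def Xm (C : Couplings) : Set (Config K L) :=
  {η | η ∉ Xs K L C ∧
    stabLevel K L C η = sSup {x | ∃ σ, σ ∉ Xs K L C ∧ stabLevel K L C σ = x}}

/-- The projection operator `P^{rs}` replacing every spin `r` by `s`. -/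
def proj (r s : Spin) (σ : Config K L) : Config K L :=
  fun v => if σ v = r then s else σ v

/-- The initial cycle `C_r = {σ : Φ(𝐫, σ) < H(𝟐) + Γ*}`. -/
noncomputable def initCycle (C : Couplings) (r : Spin) : Set (Config K L) :=
  {σ | Phi K L C (const K L r) σ < H K L C (const K L 1) + Γstar C}

/-- An optimal path from `σ` to `σ'`: a path whose height equals `Φ(σ, σ')`. -/
noncomputable def OptPath (C : Couplings) (σ σ' : Config K L) (ω : Path K L) : Prop :=
  ω.FromTo σ σ' ∧ ω.height C = Phi K L C σ σ'

/-- The configurations at which `H` attains its maximum along a path. -/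
noncomputable def pathArgmax (C : Couplings) (ω : Path K L) : Set (Config K L) :=
  {ξ | (∃ n ≤ ω.len, ω.toFun n = ξ) ∧ H K L C ξ = ω.height C}

/-- The set of minimal saddles `S(σ, σ')`. -/
noncomputable def Saddles (C : Couplings) (σ σ' : Config K L) : Set (Config K L) :=
  {ξ | ∃ ω : Path K L, OptPath K L C σ σ' ω ∧ ξ ∈ pathArgmax K L C ω}

/-- `W` is a gate for the transition `σ → σ'`. -/
noncomputable def IsGate (C : Couplings) (σ σ' : Config K L) (W : Set (Config K L)) : Prop :=
  W ⊆ Saddles K L C σ σ' ∧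
    ∀ ω : Path K L, OptPath K L C σ σ' ω → ∃ n ≤ ω.len, ω.toFun n ∈ W

/-- `W` is a minimal gate for the transition `σ → σ'`. -/
noncomputable def IsMinimalGate (C : Couplings) (σ σ' : Config K L)
    (W : Set (Config K L)) : Prop :=
  IsGate K L C σ σ' W ∧
    ∀ W', W' ⊂ W → ∃ ω : Path K L, OptPath K L C σ σ' ω ∧ ∀ n ≤ ω.len, ω.toFun n ∉ W'

/-- `G(σ, σ')`: the union of all minimal gates for the transition `σ → σ'`. -/
noncomputable def gateUnion (C : Couplings) (σ σ' : Config K L) : Set (Config K L) :=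
  {ξ | ∃ W, IsMinimalGate K L C σ σ' W ∧ ξ ∈ W}

end Paths

section Geometry

variable (K L : ℕ)

/-- The `a × b` rectangle (`a` columns, `b` rows) with lower-left corner `(x0, y0)`. -/
def rectSet (x0 : ZMod K) (y0 : ZMod L) (a b : ℕ) : Set (Vtx K L) :=
  {v | ∃ i j : ℕ, i < a ∧ j < b ∧ v = (x0 + (i : ZMod K), y0 + (j : ZMod L))}

/-- A vertical bar of `l` consecutive cells in column `x` starting at row `y0`. -/
def barV (x : ZMod K) (y0 : ZMod L) (l : ℕ) : Set (Vtx K L) :=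
  {v | ∃ j : ℕ, j < l ∧ v = (x, y0 + (j : ZMod L))}

/-- A horizontal bar of `l` consecutive cells in row `y` starting at column `x0`. -/
def barH (x0 : ZMod K) (y : ZMod L) (l : ℕ) : Set (Vtx K L) :=
  {v | ∃ i : ℕ, i < l ∧ v = (x0 + (i : ZMod K), y)}

/-- The configuration with spin `s` exactly on the set `A` and spin `r` elsewhere. -/
noncomputable def onSet (A : Set (Vtx K L)) (r s : Spin) : Config K L :=
  fun v => @ite _ (v ∈ A) (Classical.dec _) s r

/-- `R_{a,b}(r,s)`: configurations equal to `r` everywhere except for spins `s` on an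
`a × b` rectangle. -/
noncomputable def Rconf (a b : ℕ) (r s : Spin) : Set (Config K L) :=
  {σ | ∃ x0 y0, σ = onSet K L (rectSet K L x0 y0 a b) r s}

/-- `B^l_{a,b}(r,s)`: configurations equal to `r` everywhere except for spins `s` on an
`a × b` rectangle together with a bar of `l` consecutive cells attached to one of the
(vertical) sides of length `b`. -/
noncomputable def Bconf (a b l : ℕ) (r s : Spin) : Set (Config K L) :=
  {σ | ∃ (x0 : ZMod K) (y0 : ZMod L) (x : ZMod K) (j0 : ℕ),
      (x = x0 - 1 ∨ x = x0 + (a : ZMod K)) ∧ j0 + l ≤ b ∧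
      σ = onSet K L (rectSet K L x0 y0 a b ∪ barV K L x (y0 + (j0 : ZMod L)) l) r s}

/-- `B̂^l_{a,b}(r,s)`: as `B^l_{a,b}(r,s)` but with the bar attached to one of the
(horizontal) sides of length `a`. -/
noncomputable def Bhat (a b l : ℕ) (r s : Spin) : Set (Config K L) :=
  {σ | ∃ (x0 : ZMod K) (y0 : ZMod L) (y : ZMod L) (i0 : ℕ),
      (y = y0 - 1 ∨ y = y0 + (b : ZMod L)) ∧ i0 + l ≤ a ∧
      σ = onSet K L (rectSet K L x0 y0 a b ∪ barH K L (x0 + (i0 : ZMod K)) y l) r s}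

/-- The critical set `W(𝐦, 𝟏) = B^1_{ℓ*−1,ℓ*}(m,1) ∪ B̂^1_{ℓ*,ℓ*−1}(m,1)`. -/
noncomputable def Wcrit (C : Couplings) (m : Spin) : Set (Config K L) :=
  Bconf K L (lstar C - 1) (lstar C) 1 m 0 ∪ Bhat K L (lstar C) (lstar C - 1) 1 m 0

/-- The set `W'(𝐦, 𝟏) = B̂^1_{ℓ*−1,ℓ*}(m,1) ∪ B^1_{ℓ*,ℓ*−1}(m,1)`. -/
noncomputable def Wcrit' (C : Couplings) (m : Spin) : Set (Config K L) :=
  Bhat K L (lstar C - 1) (lstar C) 1 m 0 ∪ Bconf K L (lstar C) (lstar C - 1) 1 m 0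

/-- The set `𝒫(𝐫, 𝐬)`. -/
noncomputable def Pgate (r s : Spin) : Set (Config K L) :=
  Bconf K L 1 K (K - 1) r s ∪ (if K = L then Bhat K L K 1 (K - 1) r s else ∅)

/-- The set `𝒬(𝐫, 𝐬)`. -/
noncomputable def Qgate (r s : Spin) : Set (Config K L) :=
  Rconf K L 2 (K - 1) r s ∪ Bconf K L 1 K (K - 2) r s ∪
    (if K = L then Rconf K L (K - 1) 2 r s ∪ Bhat K L K 1 (K - 2) r s else ∅)

/-- The set `ℋ_i(𝐫, 𝐬)`. -/
noncomputable def Hgate (i : ℕ) (r s : Spin) : Set (Config K L) :=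
  Bconf K L 1 K i r s ∪ (⋃ j ∈ Finset.Icc (i + 1) (K - 2), Bconf K L 1 (K - 1) j r s) ∪
    (if K = L then
      Bhat K L K 1 i r s ∪ ⋃ j ∈ Finset.Icc (i + 1) (K - 2), Bhat K L (K - 1) 1 j r s
    else ∅)

/-- The set `𝒲^h_j(𝐫, 𝐬)`. -/
noncomputable def Wgate (j h : ℕ) (r s : Spin) : Set (Config K L) :=
  Bconf K L j K h r s ∪ (if K = L then Bhat K L K j h r s else ∅)

/-- The admissible gate collection for the transition between `𝟐` and `𝟑`. -/
noncomputable def gateCollection : Set (Set (Config K L)) :=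
  {A | (∃ j h, 2 ≤ j ∧ j ≤ L - 3 ∧ 1 ≤ h ∧ h ≤ K - 1 ∧ A = Wgate K L j h 1 2)
    ∨ A = Qgate K L 1 2 ∨ A = Pgate K L 1 2 ∨ A = Pgate K L 2 1 ∨ A = Qgate K L 2 1
    ∨ (∃ i, 1 ≤ i ∧ i ≤ K - 3 ∧ A = Hgate K L i 1 2)
    ∨ (∃ i, 1 ≤ i ∧ i ≤ K - 3 ∧ A = Hgate K L i 2 1)}

/-- The union `𝒲(𝟐, 𝟑)` of all the plateau gates between `𝟐` and `𝟑`. -/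
noncomputable def W23 : Set (Config K L) :=
  (⋃ i ∈ Finset.Icc 1 (K - 3), Hgate K L i 1 2) ∪ Qgate K L 1 2 ∪ Pgate K L 1 2 ∪
    (⋃ j ∈ Finset.Icc 2 (L - 3), ⋃ h ∈ Finset.Icc 1 (K - 1), Wgate K L j h 1 2) ∪
    Pgate K L 2 1 ∪ Qgate K L 2 1 ∪ (⋃ i ∈ Finset.Icc 1 (K - 3), Hgate K L i 2 1)

/-- Nearest-neighbour adjacency on the torus. -/
def Adj (v w : Vtx K L) : Prop :=
  w = (v.1 + 1, v.2) ∨ w = (v.1 - 1, v.2) ∨ w = (v.1, v.2 + 1) ∨ w = (v.1, v.2 - 1)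

/-- An `r`-cluster of `σ`: a maximal connected set of vertices all having spin `r`. -/
def IsCluster (σ : Config K L) (r : Spin) (A : Set (Vtx K L)) : Prop :=
  A.Nonempty ∧ (∀ v ∈ A, σ v = r) ∧
    (∀ v ∈ A, ∀ w ∈ A,
      Relation.ReflTransGen (fun a b => a ∈ A ∧ b ∈ A ∧ Adj K L a b) v w) ∧
    (∀ v ∈ A, ∀ w, Adj K L v w → σ w = r → w ∈ A)

/-- A set of vertices is a rectangle: the product of a set of consecutive columns and a set
of consecutive rows of the torus. -/
def IsRectangle (A : Set (Vtx K L)) : Prop :=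
  ∃ (x0 : ZMod K) (y0 : ZMod L) (a b : ℕ), a ≤ K ∧ b ≤ L ∧ A = rectSet K L x0 y0 a b

end Geometry

section LocalMin

variable (K L : ℕ) [NeZero K] [NeZero L]

/-- The set `M` of strict local minima of `H`. -/
noncomputable def Mset (C : Couplings) : Set (Config K L) :=
  {σ | ∀ σ', SingleFlip K L σ σ' → H K L C σ < H K L C σ'}

/-- A stable plateau: a nonempty set of configurations of constant energy, connected under
single spin flips, such that every configuration outside it reachable by a single spin flip
has strictly larger energy. -/
noncomputable def IsStablePlateau (C : Couplings) (D : Set (Config K L)) : Prop :=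
  D.Nonempty ∧ (∃ c, ∀ σ ∈ D, H K L C σ = c) ∧
    (∀ σ ∈ D, ∀ η ∈ D,
      Relation.ReflTransGen (fun a b => a ∈ D ∧ b ∈ D ∧ SingleFlip K L a b) σ η) ∧
    (∀ σ ∈ D, ∀ σ', SingleFlip K L σ σ' → σ' ∉ D → H K L C σ < H K L C σ')

/-- The union `M̄` of all stable plateaux. -/
noncomputable def Mbar (C : Couplings) : Set (Config K L) :=
  {σ | ∃ D, IsStablePlateau K L C D ∧ σ ∈ D}

end LocalMin

/-!
For a configuration with spins in `{1, r}` whose spin-`1` set is `A`,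
`H = H 𝟐 + (γ₁₂ + γ₁ / 2) |∂A| - 2 γ₁ |A|`, and as long as `A` wraps around the torus in neither
direction, `|∂A| ≥ 2 (#columns + #rows)` with `|A| ≤ #columns · #rows`.

Along the path the area of `A` grows from `0` to `KL` by at most one per step; let `T` be the last
time it equals `ℓ*(ℓ* - 1)`. At time `T + 1` the area is `ℓ*(ℓ* - 1) + 1`, so `A` meets at least
`2ℓ*` columns and rows, and its energy is at least `H 𝟐 + Γ*`. If the height is exactly
`H 𝟐 + Γ*`, then, since `(ℓ* - 1) γ₁ < γ₁₂ + γ₁ / 2`, the set at time `T` is an `(ℓ* - 1) × ℓ*` or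
`ℓ* × (ℓ* - 1)` rectangle and the flip at time `T` attaches a cell to one of its sides. A cell on a
short side leaves `A` inside `ℓ* - 1` columns and `ℓ* + 1` rows (or the transpose), a box it can
never leave afterwards without exceeding the energy bound, although it must end up as the whole
torus. So the cell is on a long side: that is `W(𝐫, 𝟏)`.
-/

open Finset

section Arc

variable {M : ℕ}

def arc (a : ZMod M) (m : ℕ) : Finset (ZMod M) :=
  (range m).image fun i : ℕ => a + (i : ZMod M)

lemma mem_arc {a z : ZMod M} {m : ℕ} : z ∈ arc a m ↔ ∃ i < m, z = a + (i : ZMod M) := by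
  simp [arc, eq_comm]

lemma natCast_injOn_Iio : Set.InjOn (fun i : ℕ => (i : ZMod M)) (Set.Iio M) := by
  intro i hi j hj h
  simpa [ZMod.val_natCast_of_lt hi, ZMod.val_natCast_of_lt hj] using congrArg ZMod.val h

lemma card_arc (a : ZMod M) {m : ℕ} (hm : m ≤ M) : #(arc a m) = m := by
  rw [arc, card_image_of_injOn, card_range]
  intro i hi j hj h
  exact natCast_injOn_Iio (lt_of_lt_of_le (mem_range.mp hi) hm)
    (lt_of_lt_of_le (mem_range.mp hj) hm) (add_left_cancel h)

lemma eq_sub_one_of_add_one_mem_arc {a t : ZMod M} {m : ℕ} (ht : t ∉ arc a m)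
    (h : t + 1 ∈ arc a m) : t = a - 1 := by
  obtain ⟨i, hi, hti⟩ := mem_arc.mp h
  cases i with
  | zero => simp only [Nat.cast_zero, add_zero] at hti; linear_combination hti
  | succ i =>
    exact absurd (mem_arc.mpr ⟨i, by omega, by push_cast at hti; linear_combination hti⟩) ht

lemma eq_add_of_sub_one_mem_arc {a t : ZMod M} {m : ℕ} (ht : t ∉ arc a m)
    (h : t - 1 ∈ arc a m) : t = a + m := by
  obtain ⟨i, hi, hti⟩ := mem_arc.mp h
  obtain rfl | hlt : i + 1 = m ∨ i + 1 < m := by omega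
  · push_cast; linear_combination hti
  · exact absurd (mem_arc.mpr ⟨i + 1, hlt, by push_cast; linear_combination hti⟩) ht

lemma arc_nonempty (a : ZMod M) {m : ℕ} (hm : 0 < m) : (arc a m).Nonempty :=
  ⟨a, mem_arc.mpr ⟨0, hm, by simp⟩⟩

lemma eq_range_card_of_forall_le_mem {T : Finset ℕ} (h : ∀ i ∈ T, ∀ j ≤ i, j ∈ T) :
    T = range #T := by
  refine eq_of_subset_of_card_le (fun i hi => mem_range.mpr ?_) (card_range _).le
  by_contra! hle
  have := card_le_card fun j hj => h i hi j (Nat.lt_succ_iff.mp (mem_range.mp hj))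
  rw [card_range] at this
  omega

variable [NeZero M]

def boundaryCard (S : Finset (ZMod M)) : ℕ :=
  #{z | (z ∈ S ∧ z + 1 ∉ S) ∨ (z ∉ S ∧ z + 1 ∈ S)}

def entryPoints (S : Finset (ZMod M)) : Finset (ZMod M) := {z | z ∉ S ∧ z + 1 ∈ S}

lemma boundaryCard_eq_two_mul_card_entryPoints (S : Finset (ZMod M)) :
    boundaryCard S = 2 * #(entryPoints S) := by
  have hshift : #({z | z + 1 ∈ S} : Finset (ZMod M)) = #S :=
    card_nbij' (· + 1) (· - 1) (fun z => by simp) (fun z => by simp) (fun z _ => by simp)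
      (fun z _ => by simp)
  have hexits := card_filter_add_card_filter_not (s := S) (· + 1 ∈ S)
  have hentries := card_filter_add_card_filter_not
    (s := ({z | z + 1 ∈ S} : Finset (ZMod M))) (· ∈ S)
  rw [hshift, filter_filter, filter_filter] at hentries
  have h1 : ({z | z + 1 ∈ S ∧ z ∈ S} : Finset (ZMod M)) = S.filter (· + 1 ∈ S) := by
    ext z; simp [and_comm]
  have h2 : ({z | z + 1 ∈ S ∧ z ∉ S} : Finset (ZMod M)) = entryPoints S := by
    ext z; simp [entryPoints, and_comm]
  have h3 : ({z | (z ∈ S ∧ z + 1 ∉ S) ∨ (z ∉ S ∧ z + 1 ∈ S)} : Finset (ZMod M)) =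
      S.filter (· + 1 ∉ S) ∪ entryPoints S := by
    ext z; simp [entryPoints]
  rw [h1, h2] at hentries
  rw [boundaryCard, h3, card_union_of_disjoint]
  · omega
  · exact disjoint_left.mpr fun z hz hz' => (mem_filter.mp hz').2.1 (mem_filter.mp hz).1

lemma even_boundaryCard (S : Finset (ZMod M)) : Even (boundaryCard S) := by
  rw [boundaryCard_eq_two_mul_card_entryPoints]
  exact even_two_mul _

lemma eq_univ_of_add_one_mem {S : Finset (ZMod M)} (h : ∀ z ∈ S, z + 1 ∈ S) {a : ZMod M}
    (ha : a ∈ S) : S = univ := by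
  have hclosed : ∀ n : ℕ, a + n ∈ S := by
    intro n
    induction n with
    | zero => simpa using ha
    | succ n ih => simpa [add_assoc] using h _ ih
  refine eq_univ_of_forall fun z => ?_
  simpa using hclosed (z - a).val

lemma two_le_boundaryCard {S : Finset (ZMod M)} (hne : S.Nonempty) (hS : S ≠ univ) :
    2 ≤ boundaryCard S := by
  obtain ⟨z, hz⟩ : (entryPoints S).Nonempty := by
    by_contra hempty
    have hcompl : ∀ z ∈ Sᶜ, z + 1 ∈ Sᶜ := fun z hz => by
      simp only [mem_compl] at hz ⊢
      exact fun h1 => hempty ⟨z, by simp [entryPoints, hz, h1]⟩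
    obtain ⟨b, hb⟩ : Sᶜ.Nonempty :=
      nonempty_iff_ne_empty.mpr fun h => hS ((compl_eq_empty_iff S).mp h)
    exact hne.ne_empty ((compl_eq_univ_iff S).mp (eq_univ_of_add_one_mem hcompl hb))
  rw [boundaryCard_eq_two_mul_card_entryPoints]
  have := card_pos.mpr ⟨z, hz⟩
  omega

lemma eq_arc_of_boundaryCard_eq_two {S : Finset (ZMod M)} (h : boundaryCard S = 2) :
    ∃ a, S = arc a #S := by
  rw [boundaryCard_eq_two_mul_card_entryPoints] at h
  obtain ⟨e, he⟩ := card_eq_one.mp (show #(entryPoints S) = 1 by omega)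
  have hentry : ∀ z, z ∉ S → z + 1 ∈ S → z = e := fun z hz hz1 => by
    simpa [he] using (show z ∈ entryPoints S by simp [entryPoints, hz, hz1])
  -- walking from `e + 1`, the set `S` can only be entered at `e`, that is after a full turn
  set g : ℕ → ZMod M := fun i => e + 1 + i
  have hpred : ∀ i, i + 1 < M → g (i + 1) ∈ S → g i ∈ S := by
    intro i hi hmem
    by_contra hnot
    have hzero : ((i + 1 : ℕ) : ZMod M) = 0 := by
      have := hentry _ hnot (by simpa [g, add_assoc] using hmem)
      push_cast; linear_combination this
    exact absurd (Nat.le_of_dvd (by omega) ((ZMod.natCast_eq_zero_iff _ _).mp hzero)) (by omega)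
  set T := (range M).filter (g · ∈ S)
  have hdown : ∀ i ∈ T, ∀ j ≤ i, j ∈ T := by
    intro i hi j hj
    induction i, hj using Nat.le_induction with
    | base => exact hi
    | succ i hji ih =>
      obtain ⟨hiM, hiS⟩ := mem_filter.mp hi
      have hiM := mem_range.mp hiM
      exact ih (mem_filter.mpr ⟨mem_range.mpr (by omega), hpred i hiM hiS⟩)
  have hinj : Set.InjOn g (range M) := fun i hi j hj hij =>
    natCast_injOn_Iio (by simpa using hi) (by simpa using hj) (add_left_cancel hij)
  have hST : S = T.image g := by
    ext z
    refine ⟨fun hz => mem_image.mpr ⟨(z - (e + 1)).val, ?_, by simp [g]⟩, fun hz => ?_⟩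
    · simpa [T, g, ZMod.val_lt] using hz
    · obtain ⟨i, hi, rfl⟩ := mem_image.mp hz
      exact (mem_filter.mp hi).2
  have hcard : #T = #S := by
    rw [hST, card_image_of_injOn (hinj.mono (filter_subset _ _))]
  refine ⟨e + 1, ?_⟩
  rw [arc, ← hcard, ← eq_range_card_of_forall_le_mem hdown, ← hST]

lemma boundaryCard_insert {S : Finset (ZMod M)} {t : ZMod M} (hM : (1 : ZMod M) ≠ 0)
    (ht : t ∉ S) (hpred : t - 1 ∉ S) (hsucc : t + 1 ∉ S) :
    boundaryCard (insert t S) = boundaryCard S + 2 := by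
  have hne : t - 1 ≠ t := fun h => hM (by linear_combination -h)
  have heq : filter (fun z => (z ∈ insert t S ∧ z + 1 ∉ insert t S) ∨
      (z ∉ insert t S ∧ z + 1 ∈ insert t S)) univ =
      insert t (insert (t - 1)
        (filter (fun z => (z ∈ S ∧ z + 1 ∉ S) ∨ (z ∉ S ∧ z + 1 ∈ S)) univ)) := by
    ext z
    by_cases hzt : z = t
    · subst hzt; simp [hsucc, ht, hM]
    by_cases hzt' : z = t - 1
    · subst hzt'; simp [hpred, hne]
    have hz1 : z + 1 ≠ t := fun h => hzt' (by rw [← h]; ring)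
    simp [hzt, hz1, hzt']
  rw [boundaryCard, heq, card_insert_of_notMem, card_insert_of_notMem, ← boundaryCard]
  · simp [hpred, ht]
  · simp [hne.symm, ht, hsucc]

lemma eq_of_boundaryCard_insert_arc {a t : ZMod M} {m : ℕ} (hm : 0 < m) (ht : t ∉ arc a m)
    (h : boundaryCard (insert t (arc a m)) = 2) : t = a - 1 ∨ t = a + m := by
  have hmem : a ∈ arc a m := mem_arc.mpr ⟨0, hm, by simp⟩
  have hM : (1 : ZMod M) ≠ 0 := by
    have : Nontrivial (ZMod M) := ⟨⟨a, t, fun hat => ht (hat ▸ hmem)⟩⟩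
    exact one_ne_zero
  by_cases hsucc : t + 1 ∈ arc a m
  · exact Or.inl (eq_sub_one_of_add_one_mem_arc ht hsucc)
  by_cases hpred : t - 1 ∈ arc a m
  · exact Or.inr (eq_add_of_sub_one_mem_arc ht hpred)
  have := two_le_boundaryCard ⟨a, hmem⟩ (ne_of_mem_of_not_mem' (mem_univ t) ht).symm
  rw [boundaryCard_insert hM ht hpred hsucc] at h
  omega

end Arc

section Torus

variable {K L : ℕ}

def column [NeZero L] (A : Finset (ZMod K × ZMod L)) (x : ZMod K) : Finset (ZMod L) :=
  {y | (x, y) ∈ A}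

def row [NeZero K] (A : Finset (ZMod K × ZMod L)) (y : ZMod L) : Finset (ZMod K) :=
  {x | (x, y) ∈ A}

@[simp] lemma mem_column [NeZero L] {A : Finset (ZMod K × ZMod L)} {x : ZMod K} {y : ZMod L} :
    y ∈ column A x ↔ (x, y) ∈ A := by
  simp [column]

@[simp] lemma mem_row [NeZero K] {A : Finset (ZMod K × ZMod L)} {x : ZMod K} {y : ZMod L} :
    x ∈ row A y ↔ (x, y) ∈ A := by
  simp [row]

lemma image_fst_image_swap (A : Finset (ZMod K × ZMod L)) :
    (A.image Prod.swap).image Prod.fst = A.image Prod.snd := by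
  rw [image_image]; rfl

lemma image_snd_image_swap (A : Finset (ZMod K × ZMod L)) :
    (A.image Prod.swap).image Prod.snd = A.image Prod.fst := by
  rw [image_image]; rfl

lemma card_image_swap (A : Finset (ZMod K × ZMod L)) : #(A.image Prod.swap) = #A :=
  card_image_of_injective A Prod.swap_injective

lemma card_le_mul_card_image (A : Finset (ZMod K × ZMod L)) :
    #A ≤ #(A.image Prod.fst) * #(A.image Prod.snd) :=
  card_product _ _ ▸ card_le_card subset_product

lemma image_fst_insert_arc_prod_arc (x0 : ZMod K) (y0 : ZMod L) (w : ℕ) {h : ℕ} (hh : 0 < h)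
    (v : ZMod K × ZMod L) :
    (insert v (arc x0 w ×ˢ arc y0 h)).image Prod.fst = insert v.1 (arc x0 w) := by
  rw [image_insert, product_image_fst (arc_nonempty y0 hh)]

lemma image_snd_insert_arc_prod_arc (x0 : ZMod K) (y0 : ZMod L) {w : ℕ} (hw : 0 < w) (h : ℕ)
    (v : ZMod K × ZMod L) :
    (insert v (arc x0 w ×ˢ arc y0 h)).image Prod.snd = insert v.2 (arc y0 h) := by
  rw [image_insert, product_image_snd (arc_nonempty x0 hw)]

lemma column_image_swap [NeZero K] (A : Finset (ZMod K × ZMod L)) (y : ZMod L) :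
    column (A.image Prod.swap) y = row A y := by
  ext x; simp

lemma row_image_swap [NeZero L] (A : Finset (ZMod K × ZMod L)) (x : ZMod K) :
    row (A.image Prod.swap) x = column A x := by
  ext y; simp

lemma two_le_boundaryCard_column [NeZero L] {A : Finset (ZMod K × ZMod L)}
    (hR : #(A.image Prod.snd) < L) {x : ZMod K} (hx : x ∈ A.image Prod.fst) :
    2 ≤ boundaryCard (column A x) := by
  obtain ⟨⟨x, y⟩, hxy, rfl⟩ := mem_image.mp hx
  refine two_le_boundaryCard ⟨y, by simpa using hxy⟩ fun huniv => ?_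
  have hsub : column A x ⊆ A.image Prod.snd := fun y hy =>
    mem_image.mpr ⟨_, mem_column.mp hy, rfl⟩
  have := card_le_card hsub
  rw [huniv, card_univ, ZMod.card] at this
  omega

variable [NeZero K] [NeZero L]

/-- The number of nearest-neighbour edges of the torus with exactly one endpoint in `A`. -/
def perimeter (A : Finset (ZMod K × ZMod L)) : ℕ :=
  ∑ x, boundaryCard (column A x) + ∑ y, boundaryCard (row A y)

lemma perimeter_image_swap (A : Finset (ZMod K × ZMod L)) :
    perimeter (A.image Prod.swap) = perimeter A := by
  simp only [perimeter, column_image_swap, row_image_swap, add_comm]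

lemma two_mul_card_image_fst_le {A : Finset (ZMod K × ZMod L)} (hR : #(A.image Prod.snd) < L) :
    2 * #(A.image Prod.fst) ≤ ∑ x, boundaryCard (column A x) :=
  calc 2 * #(A.image Prod.fst) = ∑ _x ∈ A.image Prod.fst, 2 := by
        rw [sum_const, smul_eq_mul, mul_comm]
    _ ≤ ∑ x ∈ A.image Prod.fst, boundaryCard (column A x) :=
        sum_le_sum fun x hx => two_le_boundaryCard_column hR hx
    _ ≤ ∑ x, boundaryCard (column A x) := sum_le_sum_of_subset (subset_univ _)

lemma two_mul_card_image_snd_le {A : Finset (ZMod K × ZMod L)} (hC : #(A.image Prod.fst) < K) :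
    2 * #(A.image Prod.snd) ≤ ∑ y, boundaryCard (row A y) := by
  have := two_mul_card_image_fst_le (A := A.image Prod.swap) (by rwa [image_snd_image_swap])
  simpa only [image_fst_image_swap, column_image_swap] using this

lemma two_mul_add_le_perimeter {A : Finset (ZMod K × ZMod L)} (hC : #(A.image Prod.fst) < K)
    (hR : #(A.image Prod.snd) < L) :
    2 * (#(A.image Prod.fst) + #(A.image Prod.snd)) ≤ perimeter A := by
  have := two_mul_card_image_fst_le hR
  have := two_mul_card_image_snd_le hC
  rw [perimeter]
  omega

lemma even_perimeter (A : Finset (ZMod K × ZMod L)) : Even (perimeter A) :=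
  (even_sum _ fun _ _ => even_boundaryCard _).add (even_sum _ fun _ _ => even_boundaryCard _)

lemma boundaryCard_column_eq_two {A : Finset (ZMod K × ZMod L)} (hC : #(A.image Prod.fst) < K)
    (hR : #(A.image Prod.snd) < L)
    (hp : perimeter A ≤ 2 * (#(A.image Prod.fst) + #(A.image Prod.snd))) {x : ZMod K}
    (hx : x ∈ A.image Prod.fst) : boundaryCard (column A x) = 2 := by
  have hrows := two_mul_card_image_snd_le hC
  have hsub : ∑ x ∈ A.image Prod.fst, boundaryCard (column A x) ≤ ∑ x, boundaryCard (column A x) :=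
    sum_le_sum_of_subset (subset_univ _)
  have hsum : ∑ _x ∈ A.image Prod.fst, 2 = ∑ x ∈ A.image Prod.fst, boundaryCard (column A x) := by
    refine le_antisymm (sum_le_sum fun x hx => two_le_boundaryCard_column hR hx) ?_
    rw [sum_const, smul_eq_mul]
    rw [perimeter] at hp
    omega
  exact ((sum_eq_sum_iff_of_le fun x hx => two_le_boundaryCard_column hR hx).mp hsum x hx).symm

lemma boundaryCard_row_eq_two {A : Finset (ZMod K × ZMod L)} (hC : #(A.image Prod.fst) < K)
    (hR : #(A.image Prod.snd) < L)
    (hp : perimeter A ≤ 2 * (#(A.image Prod.fst) + #(A.image Prod.snd))) {y : ZMod L}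
    (hy : y ∈ A.image Prod.snd) : boundaryCard (row A y) = 2 := by
  rw [← column_image_swap]
  refine boundaryCard_column_eq_two ?_ ?_ ?_ ?_ <;>
    simp only [image_fst_image_swap, image_snd_image_swap, perimeter_image_swap] <;>
    first | assumption | omega

lemma exists_eq_arc_prod_arc {A : Finset (ZMod K × ZMod L)} (hC : #(A.image Prod.fst) < K)
    (hR : #(A.image Prod.snd) < L)
    (hp : perimeter A ≤ 2 * (#(A.image Prod.fst) + #(A.image Prod.snd)))
    (hcard : #(A.image Prod.fst) * #(A.image Prod.snd) ≤ #A) :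
    ∃ x0 y0, A = arc x0 #(A.image Prod.fst) ×ˢ arc y0 #(A.image Prod.snd) := by
  have hprod : A = A.image Prod.fst ×ˢ A.image Prod.snd :=
    eq_of_subset_of_card_le subset_product (by rwa [card_product])
  obtain rfl | ⟨⟨x1, y1⟩, h1⟩ := A.eq_empty_or_nonempty
  · exact ⟨0, 0, by simp [arc]⟩
  have hrow : row A y1 = A.image Prod.fst := by
    ext x
    refine ⟨fun h => mem_image_of_mem _ (mem_row.mp h), fun hx => ?_⟩
    rw [mem_row, hprod]
    exact mem_product.mpr ⟨hx, mem_image.mpr ⟨_, h1, rfl⟩⟩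
  have hcol : column A x1 = A.image Prod.snd := by
    ext y
    refine ⟨fun h => mem_image_of_mem _ (mem_column.mp h), fun hy => ?_⟩
    rw [mem_column, hprod]
    exact mem_product.mpr ⟨mem_image.mpr ⟨_, h1, rfl⟩, hy⟩
  obtain ⟨x0, hx0⟩ := eq_arc_of_boundaryCard_eq_two
    (boundaryCard_row_eq_two hC hR hp (mem_image_of_mem Prod.snd h1))
  obtain ⟨y0, hy0⟩ := eq_arc_of_boundaryCard_eq_two
    (boundaryCard_column_eq_two hC hR hp (mem_image_of_mem Prod.fst h1))
  rw [hrow] at hx0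
  rw [hcol] at hy0
  exact ⟨x0, y0, by rw [← hx0, ← hy0]; exact hprod⟩

end Torus

section Energy

variable {K L : ℕ} [NeZero K] [NeZero L]

def zeroSet (σ : Config K L) : Finset (Vtx K L) := {v | σ v = 0}

@[simp] lemma mem_zeroSet {σ : Config K L} {v : Vtx K L} : v ∈ zeroSet σ ↔ σ v = 0 := by
  simp [zeroSet]

/-- The other endpoint of the edge that `nEdge` encodes by the pair `p`. -/
def edgeEnd (p : Vtx K L × Bool) : Vtx K L :=
  if p.2 then (p.1.1 + 1, p.1.2) else (p.1.1, p.1.2 + 1)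

lemma nEdge_eq_sum (σ : Config K L) (i j : Spin) :
    nEdge K L σ i j = ∑ p : Vtx K L × Bool,
      if (σ p.1 = i ∧ σ (edgeEnd p) = j) ∨ (σ p.1 = j ∧ σ (edgeEnd p) = i) then 1 else 0 := by
  rw [nEdge, card_filter]
  rfl

lemma card_edgeSlots : Fintype.card (Vtx K L × Bool) = 2 * (K * L) := by
  simp only [Fintype.card_prod, Fintype.card_bool, ZMod.card]
  ring

lemma nEdge_eq_zero_of_forall_ne {σ : Config K L} {i j s : Spin} (hs : ∀ v, σ v ≠ s)
    (hij : i = s ∨ j = s) : nEdge K L σ i j = 0 := by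
  rw [nEdge, card_eq_zero, filter_eq_empty_iff]
  rintro p - (⟨h1, h2⟩ | ⟨h1, h2⟩) <;> rcases hij with rfl | rfl
  exacts [hs _ h1, hs _ h2, hs _ h2, hs _ h1]

section TwoSpins

variable {σ : Config K L} {r : Spin}

lemma nEdge_add_nEdge_add_nEdge (hr : r = 1 ∨ r = 2) (hσ : ∀ v, σ v = 0 ∨ σ v = r) :
    nEdge K L σ 0 0 + nEdge K L σ r r + nEdge K L σ 0 r = 2 * (K * L) := by
  simp only [nEdge_eq_sum, ← sum_add_distrib]
  have hslot : ∀ p : Vtx K L × Bool,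
      ((if (σ p.1 = 0 ∧ σ (edgeEnd p) = 0) ∨ (σ p.1 = 0 ∧ σ (edgeEnd p) = 0) then 1 else 0)
      + (if (σ p.1 = r ∧ σ (edgeEnd p) = r) ∨ (σ p.1 = r ∧ σ (edgeEnd p) = r) then 1 else 0))
      + (if (σ p.1 = 0 ∧ σ (edgeEnd p) = r) ∨ (σ p.1 = r ∧ σ (edgeEnd p) = 0) then 1 else 0)
      = 1 := fun p => by
    rcases hσ p.1 with h1 | h1 <;> rcases hσ (edgeEnd p) with h2 | h2 <;>
      rcases hr with rfl | rfl <;> rw [h1, h2] <;> decide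
  rw [sum_congr rfl fun p _ => hslot p, sum_const, card_univ, card_edgeSlots, smul_eq_mul, mul_one]

lemma two_mul_nEdge_add_nEdge (hr : r = 1 ∨ r = 2) (hσ : ∀ v, σ v = 0 ∨ σ v = r) :
    2 * nEdge K L σ 0 0 + nEdge K L σ 0 r = 4 * #(zeroSet σ) := by
  simp only [nEdge_eq_sum, mul_sum, ← sum_add_distrib]
  have hslot : ∀ p : Vtx K L × Bool,
      2 * (if (σ p.1 = 0 ∧ σ (edgeEnd p) = 0) ∨ (σ p.1 = 0 ∧ σ (edgeEnd p) = 0) then 1 else 0)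
      + (if (σ p.1 = 0 ∧ σ (edgeEnd p) = r) ∨ (σ p.1 = r ∧ σ (edgeEnd p) = 0) then 1 else 0)
      = (if σ p.1 = 0 then 1 else 0) + (if σ (edgeEnd p) = 0 then 1 else 0) := fun p => by
    rcases hσ p.1 with h1 | h1 <;> rcases hσ (edgeEnd p) with h2 | h2 <;>
      rcases hr with rfl | rfl <;> rw [h1, h2] <;> decide
  have hend : ∑ p : Vtx K L × Bool, (if σ (edgeEnd p) = 0 then 1 else 0) =
      ∑ p : Vtx K L × Bool, (if σ p.1 = 0 then 1 else 0) := by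
    let e : Vtx K L × Bool ≃ Vtx K L × Bool :=
      { toFun := fun p => (edgeEnd p, p.2)
        invFun := fun p => (if p.2 then (p.1.1 - 1, p.1.2) else (p.1.1, p.1.2 - 1), p.2)
        left_inv := by rintro ⟨⟨x, y⟩, b⟩; cases b <;> simp [edgeEnd]
        right_inv := by rintro ⟨⟨x, y⟩, b⟩; cases b <;> simp [edgeEnd] }
    exact e.sum_comp fun p => if σ p.1 = 0 then 1 else 0
  rw [sum_congr rfl fun p _ => hslot p, sum_add_distrib, hend, Fintype.sum_prod_type]
  simp only [Fintype.sum_bool, zeroSet, card_filter, ← two_mul, ← mul_sum]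
  ring

lemma nEdge_eq_perimeter (hr : r = 1 ∨ r = 2) (hσ : ∀ v, σ v = 0 ∨ σ v = r) :
    nEdge K L σ 0 r = perimeter (zeroSet σ) := by
  have hcell : ∀ u w : Vtx K L,
      (if (σ u = 0 ∧ σ w = r) ∨ (σ u = r ∧ σ w = 0) then 1 else 0) =
      if (σ u = 0 ∧ σ w ≠ 0) ∨ (σ u ≠ 0 ∧ σ w = 0) then 1 else 0 := fun u w => by
    rcases hσ u with h1 | h1 <;> rcases hσ w with h2 | h2 <;>
      rcases hr with rfl | rfl <;> rw [h1, h2] <;> decide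
  rw [nEdge_eq_sum, Fintype.sum_prod_type]
  simp only [Fintype.sum_bool, edgeEnd, if_true, Bool.false_eq_true, if_false, sum_add_distrib,
    hcell, perimeter, boundaryCard, card_filter, mem_column, mem_row, mem_zeroSet]
  rw [Fintype.sum_prod_type, Fintype.sum_prod_type, sum_comm (γ := ZMod K), add_comm]

end TwoSpins

/-- For `c = γ₁₂ + γ₁ / 2` and `γ = γ₁`, the energy of a configuration with spins in `{1, r}` and
spin-`1` set `A`, measured from `H 𝟐` (`H_eq_H_const_one_add_excess`). -/
noncomputable def excess (c γ : ℝ) (A : Finset (ZMod K × ZMod L)) : ℝ :=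
  c * perimeter A - 2 * γ * #A

lemma excess_image_swap {c γ : ℝ} (A : Finset (ZMod K × ZMod L)) :
    excess c γ (A.image Prod.swap) = excess c γ A := by
  rw [excess, excess, perimeter_image_swap, card_image_swap]

lemma H_const_one (C : Couplings) : H K L C (const K L 1) = -(C.J22 * (2 * (K * L))) := by
  have hne : ∀ s : Spin, s ≠ 1 → ∀ v : Vtx K L, const K L 1 v ≠ s := fun s hs _ => Ne.symm hs
  have h11 : nEdge K L (const K L 1) 1 1 = 2 * (K * L) := by
    rw [nEdge, filter_true_of_mem fun p _ => Or.inl ⟨rfl, rfl⟩, card_univ, card_edgeSlots]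
  rw [H, h11, nEdge_eq_zero_of_forall_ne (hne 0 (by decide)) (Or.inl rfl),
    nEdge_eq_zero_of_forall_ne (hne 2 (by decide)) (Or.inl rfl),
    nEdge_eq_zero_of_forall_ne (hne 0 (by decide)) (Or.inl rfl),
    nEdge_eq_zero_of_forall_ne (hne 0 (by decide)) (Or.inl rfl),
    nEdge_eq_zero_of_forall_ne (hne 2 (by decide)) (Or.inr rfl)]
  push_cast
  ring

lemma H_eq_H_const_one_add_excess (C : Couplings) (h2233 : C.J22 = C.J33) (h1213 : C.J12 = C.J13)
    {σ : Config K L} {r : Spin} (hr : r = 1 ∨ r = 2) (hσ : ∀ v, σ v = 0 ∨ σ v = r) :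
    H K L C σ = H K L C (const K L 1) + excess (C.γ12 + C.γ1 / 2) C.γ1 (zeroSet σ) := by
  have h1 : (nEdge K L σ 0 0 : ℝ) + nEdge K L σ r r + nEdge K L σ 0 r = 2 * (K * L) := by
    exact_mod_cast nEdge_add_nEdge_add_nEdge hr hσ
  have h2 : 2 * (nEdge K L σ 0 0 : ℝ) + nEdge K L σ 0 r = 4 * #(zeroSet σ) := by
    exact_mod_cast two_mul_nEdge_add_nEdge hr hσ
  have h3 : (nEdge K L σ 0 r : ℝ) = perimeter (zeroSet σ) := by
    exact_mod_cast nEdge_eq_perimeter hr hσ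
  have hmiss : ∀ s : Spin, s ≠ 0 → s ≠ r → ∀ v, σ v ≠ s := fun s h0 hr' v hv => by
    rcases hσ v with h | h <;> rw [h] at hv
    exacts [h0 hv.symm, hr' hv.symm]
  rw [H_const_one, excess, Couplings.γ1, Couplings.γ12]
  rcases hr with rfl | rfl
  · rw [H, nEdge_eq_zero_of_forall_ne (hmiss 2 (by decide) (by decide)) (Or.inl rfl),
      nEdge_eq_zero_of_forall_ne (hmiss 2 (by decide) (by decide)) (Or.inr rfl),
      nEdge_eq_zero_of_forall_ne (hmiss 2 (by decide) (by decide)) (Or.inr rfl)]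
    push_cast
    linear_combination (-C.J22) * h1 + ((C.J22 - C.J11) / 2) * h2
      + (C.J12 + C.J22 + (C.J11 - C.J22) / 2) * h3
  · rw [H, nEdge_eq_zero_of_forall_ne (hmiss 1 (by decide) (by decide)) (Or.inl rfl),
      nEdge_eq_zero_of_forall_ne (hmiss 1 (by decide) (by decide)) (Or.inr rfl),
      nEdge_eq_zero_of_forall_ne (hmiss 1 (by decide) (by decide)) (Or.inl rfl), ← h2233, ← h1213]
    push_cast
    linear_combination (-C.J22) * h1 + ((C.J22 - C.J11) / 2) * h2
      + (C.J12 + C.J22 + (C.J11 - C.J22) / 2) * h3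

end Energy

/-- The excess of an `(ℓ - 1) × ℓ` rectangle with one cell attached to a side: its perimeter is
`4ℓ` and its area `ℓ(ℓ - 1) + 1`. -/
noncomputable def barrier (c γ : ℝ) (ℓ : ℕ) : ℝ := 4 * c * ℓ - 2 * γ * (ℓ ^ 2 - ℓ + 1)

lemma cast_mul_sub_one (ℓ : ℕ) : ((ℓ * (ℓ - 1) : ℕ) : ℝ) = (ℓ : ℝ) ^ 2 - ℓ := by
  cases ℓ <;> push_cast <;> ring

lemma two_mul_le_add_of_lt_mul {ℓ w h : ℕ} (hlt : ℓ * (ℓ - 1) < w * h) : 2 * ℓ ≤ w + h := by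
  by_contra! hsum
  have hsq : 4 * (w * h) ≤ (w + h) ^ 2 := by nlinarith [sq_nonneg ((w : ℤ) - h)]
  obtain ⟨m, rfl⟩ : ∃ m, ℓ = m + 1 := ⟨ℓ - 1, by omega⟩
  simp only [Nat.add_sub_cancel] at hlt
  nlinarith

lemma eq_of_add_lt_of_le_mul {ℓ w h : ℕ} (hℓ : 2 ≤ ℓ) (hsum : w + h < 2 * ℓ)
    (hmul : ℓ * (ℓ - 1) ≤ w * h) : (w = ℓ - 1 ∧ h = ℓ) ∨ (w = ℓ ∧ h = ℓ - 1) := by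
  obtain ⟨m, rfl⟩ : ∃ m, ℓ = m + 1 := ⟨ℓ - 1, by omega⟩
  simp only [Nat.add_sub_cancel] at hmul ⊢
  have hw : m ≤ w := by nlinarith
  have hh : m ≤ h := by nlinarith
  have : m + 1 ≤ w ∨ m + 1 ≤ h := by
    by_contra! hlt
    obtain rfl : w = m := by omega
    obtain rfl : h = w := by omega
    nlinarith
  omega

section Shapes

variable {K L : ℕ} [NeZero K] [NeZero L] {ℓ : ℕ} {c γ : ℝ}

lemma barrier_le_excess {A : Finset (ZMod K × ZMod L)} (hc : 0 ≤ c) (hK : #A < K) (hL : #A < L)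
    (hA : #A = ℓ * (ℓ - 1) + 1) : barrier c γ ℓ ≤ excess c γ A := by
  have hC : #(A.image Prod.fst) < K := card_image_le.trans_lt hK
  have hR : #(A.image Prod.snd) < L := card_image_le.trans_lt hL
  have hsum := two_mul_le_add_of_lt_mul ((Nat.lt_succ_self _).trans_le
    (hA ▸ card_le_mul_card_image A))
  have hp : (4 * ℓ : ℝ) ≤ perimeter A := by
    exact_mod_cast (show 4 * ℓ ≤ perimeter A by have := two_mul_add_le_perimeter hC hR; omega)
  rw [barrier, excess, hA, Nat.cast_add, cast_mul_sub_one, Nat.cast_one]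
  nlinarith

lemma perimeter_lt_of_excess_le {A : Finset (ZMod K × ZMod L)} (hγ : 0 < γ) (hc : 0 < c)
    (hA : #A = ℓ * (ℓ - 1)) (hE : excess c γ A ≤ barrier c γ ℓ) : perimeter A < 4 * ℓ := by
  rw [barrier, excess, hA, cast_mul_sub_one] at hE
  have : c * perimeter A < c * (4 * ℓ) := by linarith
  exact_mod_cast lt_of_mul_lt_mul_left this hc.le

lemma perimeter_le_of_excess_le {A : Finset (ZMod K × ZMod L)} (hc : 0 < c)
    (hA : #A = ℓ * (ℓ - 1) + 1) (hE : excess c γ A ≤ barrier c γ ℓ) : perimeter A ≤ 4 * ℓ := by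
  rw [barrier, excess, hA, Nat.cast_add, cast_mul_sub_one, Nat.cast_one] at hE
  have : c * perimeter A ≤ c * (4 * ℓ) := by linarith
  exact_mod_cast le_of_mul_le_mul_left this hc

lemma exists_rect_of_excess_le {A : Finset (ZMod K × ZMod L)} (hℓ : 2 ≤ ℓ) (hγ : 0 < γ)
    (hc : 0 < c) (hK : #A < K) (hL : #A < L) (hA : #A = ℓ * (ℓ - 1))
    (hE : excess c γ A ≤ barrier c γ ℓ) :
    ∃ x0 y0, A = arc x0 (ℓ - 1) ×ˢ arc y0 ℓ ∨ A = arc x0 ℓ ×ˢ arc y0 (ℓ - 1) := by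
  have hC : #(A.image Prod.fst) < K := card_image_le.trans_lt hK
  have hR : #(A.image Prod.snd) < L := card_image_le.trans_lt hL
  have hp := perimeter_lt_of_excess_le hγ hc hA hE
  have hp2 := two_mul_add_le_perimeter hC hR
  have hdims := eq_of_add_lt_of_le_mul hℓ (by omega) (hA ▸ card_le_mul_card_image A)
  have hp' : perimeter A ≤ 2 * (#(A.image Prod.fst) + #(A.image Prod.snd)) := by
    obtain ⟨t, ht⟩ := even_perimeter A
    omega
  have hcard : #(A.image Prod.fst) * #(A.image Prod.snd) ≤ #A := by
    rcases hdims with ⟨hw, hh⟩ | ⟨hw, hh⟩ <;> rw [hw, hh, hA, Nat.mul_comm]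
  obtain ⟨x0, y0, hrect⟩ := exists_eq_arc_prod_arc hC hR hp' hcard
  refine ⟨x0, y0, ?_⟩
  rcases hdims with ⟨hw, hh⟩ | ⟨hw, hh⟩ <;> rw [hw, hh] at hrect <;> simp [hrect]

lemma barrier_lt_of_le_mul (hγ : 0 < γ) (hc : ((ℓ : ℝ) - 1) * γ < c) {n s : ℕ} {p : ℝ}
    (hn : ℓ * (ℓ - 1) < n) (hs : (n : ℝ) - (ℓ ^ 2 - ℓ) ≤ (ℓ - 1) * (s - 2 * ℓ))
    (hp : 2 * (s : ℝ) ≤ p) : barrier c γ ℓ < c * p - 2 * γ * (n + 1) := by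
  have hn' : (ℓ : ℝ) ^ 2 - ℓ + 1 ≤ n := by
    rw [← cast_mul_sub_one]; exact_mod_cast hn
  have hℓ : 1 < (ℓ : ℝ) := by
    by_contra! h
    obtain rfl | rfl : ℓ = 0 ∨ ℓ = 1 := by
      have : ℓ ≤ 1 := by exact_mod_cast h
      omega
    all_goals push_cast at hs hn'; nlinarith [s.cast_nonneg (α := ℝ)]
  have hs2 : 0 < (s : ℝ) - 2 * ℓ := by nlinarith
  have hc0 : 0 < c := lt_of_le_of_lt (by positivity) hc
  have : γ * (n - (ℓ ^ 2 - ℓ)) < c * (s - 2 * ℓ) := by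
    calc γ * (n - (ℓ ^ 2 - ℓ)) ≤ γ * ((ℓ - 1) * (s - 2 * ℓ)) := by gcongr
      _ = ((ℓ - 1) * γ) * (s - 2 * ℓ) := by ring
      _ < c * (s - 2 * ℓ) := by gcongr
  rw [barrier]
  nlinarith

lemma barrier_lt_excess_insert {A : Finset (ZMod K × ZMod L)} {v : ZMod K × ZMod L} (hℓ : 1 ≤ ℓ)
    (hγ : 0 < γ) (hc : ((ℓ : ℝ) - 1) * γ < c) (hK : ℓ + 2 < K) (hL : ℓ + 2 < L)
    (hw : #(A.image Prod.fst) ≤ ℓ - 1) (hh : #(A.image Prod.snd) ≤ ℓ + 1)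
    (hA : ℓ * (ℓ - 1) < #A) (hv : v ∉ A)
    (hesc : ℓ - 1 < #((insert v A).image Prod.fst) ∨ ℓ + 1 < #((insert v A).image Prod.snd)) :
    barrier c γ ℓ < excess c γ (insert v A) := by
  set w := #(A.image Prod.fst)
  set h := #(A.image Prod.snd)
  set h' := #((insert v A).image Prod.snd) with hh'def
  have hh' : h ≤ h' ∧ h' ≤ h + 1 := by
    simp only [h', h, image_insert]
    exact ⟨card_le_card (subset_insert _ _), card_insert_le _ _⟩
  have hw' : #((insert v A).image Prod.fst) ≤ w + 1 := by
    simp only [w, image_insert]; exact card_insert_le _ _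
  have hp := two_mul_add_le_perimeter (A := insert v A) (by omega) (by omega)
  rw [← hh'def] at hp
  have hnwh := card_le_mul_card_image A
  have hℓR : (1 : ℝ) ≤ ℓ := by exact_mod_cast hℓ
  have hwR : (w : ℝ) ≤ ℓ - 1 := by
    have : ((ℓ - 1 : ℕ) : ℝ) = ℓ - 1 := by push_cast [hℓ]; ring
    exact this ▸ (Nat.cast_le.mpr hw)
  have hnR : (ℓ : ℝ) ^ 2 - ℓ < #A := by
    rw [← cast_mul_sub_one]; exact_mod_cast hA
  rw [excess, card_insert_of_notMem hv, Nat.cast_add, Nat.cast_one]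
  refine barrier_lt_of_le_mul hγ hc hA ?_ (by exact_mod_cast hp)
  by_cases hv1 : v.1 ∈ A.image Prod.fst
  · have hw'eq : #((insert v A).image Prod.fst) = w := by
      rw [image_insert, insert_eq_of_mem hv1]
    have hhℓ : h = ℓ + 1 ∧ h' = ℓ + 2 := by omega
    have hnR' : (#A : ℝ) ≤ w * (ℓ + 1) := by
      exact_mod_cast (hhℓ.1 ▸ hnwh : #A ≤ w * (ℓ + 1))
    rw [hw'eq, hhℓ.2]
    push_cast
    nlinarith
  · have hw'eq : #((insert v A).image Prod.fst) = w + 1 := by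
      rw [image_insert, card_insert_of_notMem hv1]
    have hnR' : (#A : ℝ) ≤ w * h' := by
      exact_mod_cast hnwh.trans (Nat.mul_le_mul_left _ hh'.1)
    have hh'R : (ℓ : ℝ) - 1 ≤ h' := by nlinarith
    rw [hw'eq]
    push_cast
    nlinarith [mul_nonneg (sub_nonneg.mpr hwR) (sub_nonneg.mpr hh'R)]

end Shapes

def FlipSeq {α : Type*} [DecidableEq α] (F : ℕ → Finset α) (n : ℕ) : Prop :=
  ∀ k < n, ∃ v, (v ∉ F k ∧ F (k + 1) = insert v (F k)) ∨ F (k + 1) = (F k).erase v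

namespace FlipSeq

variable {α β : Type*} [DecidableEq α] [DecidableEq β] {F : ℕ → Finset α} {n : ℕ}

lemma card_succ_le (hF : FlipSeq F n) {k : ℕ} (hk : k < n) : #(F (k + 1)) ≤ #(F k) + 1 := by
  obtain ⟨v, ⟨-, h⟩ | h⟩ := hF k hk <;> rw [h]
  · exact card_insert_le _ _
  · exact (card_erase_le).trans (Nat.le_succ _)

lemma exists_eq_insert (hF : FlipSeq F n) {k : ℕ} (hk : k < n) (hlt : #(F k) < #(F (k + 1))) :
    ∃ v ∉ F k, F (k + 1) = insert v (F k) := by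
  obtain ⟨v, h | h⟩ := hF k hk
  · exact ⟨v, h⟩
  · rw [h] at hlt
    exact absurd card_erase_le hlt.not_ge

lemma shift (hF : FlipSeq F n) (T : ℕ) : FlipSeq (fun k => F (T + k)) (n - T) :=
  fun k hk => hF (T + k) (by omega)

lemma image (hF : FlipSeq F n) {g : α → β} (hg : Function.Injective g) :
    FlipSeq (fun k => (F k).image g) n := by
  intro k hk
  obtain ⟨v, ⟨hv, h⟩ | h⟩ := hF k hk
  · exact ⟨g v, Or.inl ⟨by simpa [hg.eq_iff] using hv, by simp [h, image_insert]⟩⟩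
  · exact ⟨g v, Or.inr (by simp [h, image_erase hg])⟩

end FlipSeq

lemma exists_last_eq {f : ℕ → ℕ} {n N : ℕ} (hstep : ∀ k < n, f (k + 1) ≤ f k + 1)
    (h0 : f 0 ≤ N) (hn : N < f n) : ∃ T < n, f T = N ∧ ∀ k, T < k → k ≤ n → N < f k := by
  induction n with
  | zero => omega
  | succ n ih =>
    by_cases hlt : N < f n
    · obtain ⟨T, hT, hTN, hafter⟩ := ih (fun k hk => hstep k (by omega)) hlt
      refine ⟨T, by omega, hTN, fun k hTk hk => ?_⟩
      rcases Nat.lt_or_ge k (n + 1) with hk' | hk'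
      · exact hafter k hTk (by omega)
      · rwa [show k = n + 1 by omega]
    · refine ⟨n, by omega, by have := hstep n (by omega); omega, fun k hk hk' => ?_⟩
      rwa [show k = n + 1 by omega]

/-- The spin-`1` sets of the configurations in `B^1_{a,b}(r, 1)`. -/
def IsRectWithCellV {K L : ℕ} (a b : ℕ) (A : Finset (ZMod K × ZMod L)) : Prop :=
  ∃ x0 y0 v, A = insert v (arc x0 a ×ˢ arc y0 b) ∧ v.2 ∈ arc y0 b ∧ (v.1 = x0 - 1 ∨ v.1 = x0 + a)

/-- The spin-`1` sets of the configurations in `B̂^1_{a,b}(r, 1)`. -/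
def IsRectWithCellH {K L : ℕ} (a b : ℕ) (A : Finset (ZMod K × ZMod L)) : Prop :=
  ∃ x0 y0 v, A = insert v (arc x0 a ×ˢ arc y0 b) ∧ v.1 ∈ arc x0 a ∧ (v.2 = y0 - 1 ∨ v.2 = y0 + b)

section Growth

variable {K L : ℕ} [NeZero K] [NeZero L] {ℓ : ℕ} {c γ : ℝ}

lemma card_image_fst_le_of_flipSeq {F : ℕ → Finset (ZMod K × ZMod L)} {n : ℕ}
    (hF : FlipSeq F n) (hℓ : 1 ≤ ℓ) (hγ : 0 < γ) (hc : ((ℓ : ℝ) - 1) * γ < c)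
    (hK : ℓ + 2 < K) (hL : ℓ + 2 < L) (hvol : ∀ k ≤ n, ℓ * (ℓ - 1) < #(F k))
    (hE : ∀ k ≤ n, excess c γ (F k) ≤ barrier c γ ℓ)
    (h0 : #((F 0).image Prod.fst) ≤ ℓ - 1 ∧ #((F 0).image Prod.snd) ≤ ℓ + 1) :
    #((F n).image Prod.fst) ≤ ℓ - 1 := by
  suffices ∀ k ≤ n, #((F k).image Prod.fst) ≤ ℓ - 1 ∧ #((F k).image Prod.snd) ≤ ℓ + 1 from
    (this n le_rfl).1
  intro k hk
  induction k with
  | zero => exact h0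
  | succ k ih =>
    obtain ⟨hw, hh⟩ := ih (by omega)
    obtain ⟨v, ⟨hv, hins⟩ | herase⟩ := hF k (by omega)
    · by_contra hesc
      rw [hins, not_and_or, not_le, not_le] at hesc
      have := barrier_lt_excess_insert hℓ hγ hc hK hL hw hh (hvol k (by omega)) hv hesc
      exact (hE (k + 1) hk).not_gt (hins ▸ this)
    · have hsub : F (k + 1) ⊆ F k := herase ▸ erase_subset _ _
      exact ⟨(card_le_card (image_subset_image hsub)).trans hw,
        (card_le_card (image_subset_image hsub)).trans hh⟩

lemma insert_arc_prod_arc_cases {x0 : ZMod K} {y0 : ZMod L} {w h : ℕ} {v : ZMod K × ZMod L}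
    (hw : 0 < w) (hh : 0 < h) (hwK : w + 1 < K) (hhL : h + 1 < L)
    (hv : v ∉ arc x0 w ×ˢ arc y0 h)
    (hp : perimeter (insert v (arc x0 w ×ˢ arc y0 h)) ≤ 2 * (w + h + 1)) :
    (v.1 ∈ arc x0 w ∧ (v.2 = y0 - 1 ∨ v.2 = y0 + h)) ∨
      (v.2 ∈ arc y0 h ∧ (v.1 = x0 - 1 ∨ v.1 = x0 + w)) := by
  set A := insert v (arc x0 w ×ˢ arc y0 h)
  have hfst := image_fst_insert_arc_prod_arc x0 y0 w hh v
  have hsnd := image_snd_insert_arc_prod_arc x0 y0 hw h v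
  have hcw := card_arc x0 (show w ≤ K by omega)
  have hch := card_arc y0 (show h ≤ L by omega)
  have hC : #(A.image Prod.fst) < K := by rw [hfst]; exact (card_insert_le _ _).trans_lt (by omega)
  have hR : #(A.image Prod.snd) < L := by rw [hsnd]; exact (card_insert_le _ _).trans_lt (by omega)
  have hp2 := two_mul_add_le_perimeter hC hR
  rw [hfst, hsnd] at hp2
  by_cases hv1 : v.1 ∈ arc x0 w
  · have hv2 : v.2 ∉ arc y0 h := fun hv2 => hv (mem_product.mpr ⟨hv1, hv2⟩)
    have hcol : column A v.1 = insert v.2 (arc y0 h) := by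
      ext y; simp [A, Prod.ext_iff, hv1, eq_comm]
    have hpA : perimeter A ≤ 2 * (#(A.image Prod.fst) + #(A.image Prod.snd)) := by
      rw [hfst, hsnd, insert_eq_of_mem hv1, card_insert_of_notMem hv2]
      omega
    have := boundaryCard_column_eq_two hC hR hpA (hfst ▸ mem_insert_self _ _)
    rw [hcol] at this
    exact Or.inl ⟨hv1, eq_of_boundaryCard_insert_arc hh hv2 this⟩
  · have hv2 : v.2 ∈ arc y0 h := by
      by_contra hv2
      rw [card_insert_of_notMem hv1, card_insert_of_notMem hv2] at hp2
      omega
    have hrow : row A v.2 = insert v.1 (arc x0 w) := by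
      ext x; simp [A, Prod.ext_iff, hv2, eq_comm]
    have hpA : perimeter A ≤ 2 * (#(A.image Prod.fst) + #(A.image Prod.snd)) := by
      rw [hfst, hsnd, insert_eq_of_mem hv2, card_insert_of_notMem hv1]
      omega
    have := boundaryCard_row_eq_two hC hR hpA (hsnd ▸ mem_insert_self _ _)
    rw [hrow] at this
    exact Or.inr ⟨hv2, eq_of_boundaryCard_insert_arc hw hv1 this⟩

lemma lt_card_image_fst_or_lt_card_image_snd {F : ℕ → Finset (ZMod K × ZMod L)} {n T : ℕ}
    (hF : FlipSeq F n) (hℓ : 1 ≤ ℓ) (hγ : 0 < γ) (hc : ((ℓ : ℝ) - 1) * γ < c)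
    (hK : ℓ + 2 < K) (hL : ℓ + 2 < L) (hFn : F n = univ) (hT : T ≤ n)
    (hvol : ∀ k, T ≤ k → k ≤ n → ℓ * (ℓ - 1) < #(F k))
    (hE : ∀ k ≤ n, excess c γ (F k) ≤ barrier c γ ℓ) :
    ℓ - 1 < #((F T).image Prod.fst) ∨ ℓ + 1 < #((F T).image Prod.snd) := by
  by_contra! h0
  have := card_image_fst_le_of_flipSeq (hF.shift T) hℓ hγ hc hK hL
    (fun k hk => hvol (T + k) (by omega) (by omega)) (fun k hk => hE (T + k) (by omega))
    (by simpa using h0)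
  rw [Nat.add_sub_cancel' hT, hFn, image_univ_of_surjective Prod.fst_surjective, card_univ,
    ZMod.card] at this
  omega

lemma lt_card_image_snd_or_lt_card_image_fst {F : ℕ → Finset (ZMod K × ZMod L)} {n T : ℕ}
    (hF : FlipSeq F n) (hℓ : 1 ≤ ℓ) (hγ : 0 < γ) (hc : ((ℓ : ℝ) - 1) * γ < c)
    (hK : ℓ + 2 < K) (hL : ℓ + 2 < L) (hFn : F n = univ) (hT : T ≤ n)
    (hvol : ∀ k, T ≤ k → k ≤ n → ℓ * (ℓ - 1) < #(F k))
    (hE : ∀ k ≤ n, excess c γ (F k) ≤ barrier c γ ℓ) :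
    ℓ - 1 < #((F T).image Prod.snd) ∨ ℓ + 1 < #((F T).image Prod.fst) := by
  have := lt_card_image_fst_or_lt_card_image_snd (F := fun k => (F k).image Prod.swap)
    (hF.image Prod.swap_injective) hℓ hγ hc hL hK
    (by simp only [hFn, image_univ_of_surjective Prod.swap_surjective]) hT
    (fun k hk hk' => card_image_swap (F k) ▸ hvol k hk hk')
    (fun k hk => excess_image_swap (F k) ▸ hE k hk)
  simpa only [image_fst_image_swap, image_snd_image_swap] using this

theorem isRectWithCell_of_flipSeq {F : ℕ → Finset (ZMod K × ZMod L)} {n T : ℕ}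
    (hF : FlipSeq F n) (hℓ : 2 ≤ ℓ) (hγ : 0 < γ) (hc : ((ℓ : ℝ) - 1) * γ < c)
    (hK : 2 * ℓ ^ 2 ≤ K) (hL : 2 * ℓ ^ 2 ≤ L) (hFn : F n = univ) (hT : T < n)
    (hFT : #(F T) = ℓ * (ℓ - 1)) (hafter : ∀ k, T < k → k ≤ n → ℓ * (ℓ - 1) < #(F k))
    (hE : ∀ k ≤ n, excess c γ (F k) ≤ barrier c γ ℓ) :
    IsRectWithCellV (ℓ - 1) ℓ (F (T + 1)) ∨ IsRectWithCellH ℓ (ℓ - 1) (F (T + 1)) := by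
  have hsq : ℓ * (ℓ - 1) + 1 < ℓ ^ 2 := by
    obtain ⟨m, rfl⟩ : ∃ m, ℓ = m + 2 := ⟨ℓ - 2, by omega⟩
    rw [show m + 2 - 1 = m + 1 by omega]
    nlinarith
  have hℓ2 : ℓ + 2 < 2 * ℓ ^ 2 := by nlinarith
  have hc0 : 0 < c := by
    have : (2 : ℝ) ≤ ℓ := by exact_mod_cast hℓ
    nlinarith
  obtain ⟨x0, y0, hrect⟩ := exists_rect_of_excess_le hℓ hγ hc0 (by omega) (by omega) hFT
    (hE T hT.le)
  obtain ⟨v, hv, hins⟩ := hF.exists_eq_insert hT (hFT ▸ hafter (T + 1) (by omega) hT)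
  have hp := perimeter_le_of_excess_le hc0 (by rw [hins, card_insert_of_notMem hv, hFT])
    (hE (T + 1) hT)
  -- a cell on a short side would trap the sequence in `ℓ - 1` columns or in `ℓ - 1` rows
  have htrap := lt_card_image_fst_or_lt_card_image_snd hF (by omega) hγ hc (by omega) (by omega)
    hFn hT (fun k hk hk' => hafter k (by omega) hk') hE
  have htrap' := lt_card_image_snd_or_lt_card_image_fst hF (by omega) hγ hc (by omega) (by omega)
    hFn hT (fun k hk hk' => hafter k (by omega) hk') hE
  rw [hins] at hp htrap htrap' ⊢
  rcases hrect with hrect | hrect <;> rw [hrect] at hv hp htrap htrap' ⊢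
  · rcases insert_arc_prod_arc_cases (by omega) (by omega) (by omega) (by omega) hv
      (hp.trans (by omega)) with ⟨hv1, -⟩ | ⟨hv2, hv1⟩
    · rw [image_fst_insert_arc_prod_arc _ _ _ (by omega), insert_eq_of_mem hv1,
        card_arc _ (by omega), image_snd_insert_arc_prod_arc _ _ (by omega)] at htrap
      have := card_insert_le v.2 (arc y0 ℓ)
      rw [card_arc _ (by omega)] at this
      omega
    · exact Or.inl ⟨x0, y0, v, rfl, hv2, hv1⟩
  · rcases insert_arc_prod_arc_cases (by omega) (by omega) (by omega) (by omega) hv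
      (hp.trans (by omega)) with ⟨hv1, hv2⟩ | ⟨hv2, -⟩
    · exact Or.inr ⟨x0, y0, v, rfl, hv1, hv2⟩
    · rw [image_snd_insert_arc_prod_arc _ _ (by omega), insert_eq_of_mem hv2,
        card_arc _ (by omega), image_fst_insert_arc_prod_arc _ _ _ (by omega)] at htrap'
      have := card_insert_le v.1 (arc x0 ℓ)
      rw [card_arc _ (by omega)] at this
      omega

end Growth

namespace Admissible

variable {K L : ℕ} {C : Couplings}

lemma γ1_pos (hadm : Admissible K L C) : 0 < C.γ1 := by
  rw [Couplings.γ1]; linarith [hadm.h1122]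

lemma γ12_add_pos (hadm : Admissible K L C) : 0 < C.γ12 + C.γ1 / 2 := by
  rw [Couplings.γ12]; linarith [hadm.pos12, hadm.pos22, hadm.γ1_pos]

lemma lstar_eq_ceil (hadm : Admissible K L C) :
    lstar C = ⌈(C.γ12 + C.γ1 / 2) / C.γ1⌉₊ := by
  rw [lstar]; congr 1; field_simp [hadm.γ1_pos.ne']

lemma one_lt_div (hadm : Admissible K L C) : 1 < (C.γ12 + C.γ1 / 2) / C.γ1 := by
  rw [lt_div_iff₀ hadm.γ1_pos, one_mul]
  linarith [hadm.hC, hadm.pos22, hadm.pos23, show 0 < C.γ23 by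
    rw [Couplings.γ23]; linarith [hadm.pos22, hadm.pos23]]

lemma two_le_lstar (hadm : Admissible K L C) : 2 ≤ lstar C := by
  rw [hadm.lstar_eq_ceil]
  exact Nat.lt_ceil.mpr (by exact_mod_cast hadm.one_lt_div)

lemma lstar_sub_one_mul_lt (hadm : Admissible K L C) :
    ((lstar C : ℝ) - 1) * C.γ1 < C.γ12 + C.γ1 / 2 := by
  have := Nat.ceil_lt_add_one (zero_le_one.trans hadm.one_lt_div.le)
  rw [← hadm.lstar_eq_ceil, ← sub_lt_iff_lt_add, lt_div_iff₀ hadm.γ1_pos] at this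
  exact this

lemma Γstar_eq_barrier (hadm : Admissible K L C) :
    Γstar C = barrier (C.γ12 + C.γ1 / 2) C.γ1 (lstar C) := by
  rw [Γstar, fh, barrier, hadm.lstar_eq_ceil,
    natCast_ceil_eq_intCast_ceil (zero_le_one.trans hadm.one_lt_div.le)]

lemma lstar_mul_sub_one_add_one_lt (hadm : Admissible K L C) :
    lstar C * (lstar C - 1) + 1 < K := by
  have hK := hadm.hK
  obtain ⟨m, hm⟩ : ∃ m, lstar C = m + 2 := ⟨lstar C - 2, by have := hadm.two_le_lstar; omega⟩
  rw [hm] at hK ⊢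
  rw [show m + 2 - 1 = m + 1 by omega]
  nlinarith

end Admissible

section Configurations

variable {K L : ℕ}

lemma coe_arc_prod_arc (x0 : ZMod K) (y0 : ZMod L) (a b : ℕ) :
    (↑(arc x0 a ×ˢ arc y0 b) : Set (Vtx K L)) = rectSet K L x0 y0 a b := by
  ext ⟨x, y⟩
  simp only [coe_product, Set.mem_prod, mem_coe, mem_arc, rectSet, Set.mem_ofPred_eq,
    Prod.mk.injEq]
  constructor
  · rintro ⟨⟨i, hi, rfl⟩, ⟨j, hj, rfl⟩⟩
    exact ⟨i, j, hi, hj, rfl, rfl⟩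
  · rintro ⟨i, j, hi, hj, rfl, rfl⟩
    exact ⟨⟨i, hi, rfl⟩, ⟨j, hj, rfl⟩⟩

lemma barV_one (x : ZMod K) (y : ZMod L) : barV K L x y 1 = {(x, y)} := by
  ext; simp [barV]

lemma barH_one (x : ZMod K) (y : ZMod L) : barH K L x y 1 = {(x, y)} := by
  ext; simp [barH]

variable [NeZero K] [NeZero L]

lemma Path.le_height (ω : Path K L) (C : Couplings) {k : ℕ} (hk : k ≤ ω.len) :
    H K L C (ω.toFun k) ≤ ω.height C :=
  le_sup' (fun n => H K L C (ω.toFun n)) (mem_range.mpr (Nat.lt_succ_of_le hk))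

lemma Path.flipSeq_zeroSet (ω : Path K L) : FlipSeq (fun k => zeroSet (ω.toFun k)) ω.len := by
  intro k hk
  obtain ⟨v, hv, hsame⟩ := ω.step k hk
  refine ⟨v, ?_⟩
  by_cases h0 : ω.toFun (k + 1) v = 0
  · refine Or.inl ⟨by simpa [h0] using hv, ?_⟩
    ext u
    by_cases hu : u = v
    · simp [hu, h0]
    · simp [hu, hsame u hu]
  · refine Or.inr ?_
    ext u
    by_cases hu : u = v
    · simp [hu, h0]
    · simp [hu, hsame u hu]

lemma Path.exists_last_card_zeroSet_eq (ω : Path K L) {r : Spin} (hr : r ≠ 0)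
    (hfromto : ω.FromTo (const K L r) (const K L 0)) {N : ℕ} (hN : N < K * L) :
    ∃ T < ω.len, #(zeroSet (ω.toFun T)) = N ∧
      ∀ k, T < k → k ≤ ω.len → N < #(zeroSet (ω.toFun k)) := by
  refine exists_last_eq (fun k hk => ω.flipSeq_zeroSet.card_succ_le hk) ?_ ?_
  · simp [hfromto.1, zeroSet, const, hr]
  · simpa [hfromto.2, zeroSet, const] using hN

lemma onSet_zeroSet {σ : Config K L} {r : Spin} (hσ : ∀ v, σ v = 0 ∨ σ v = r) :
    onSet K L ↑(zeroSet σ) r 0 = σ := by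
  funext v
  simp only [onSet, mem_coe, mem_zeroSet]
  split_ifs with h0
  · exact h0.symm
  · exact ((hσ v).resolve_left h0).symm

lemma mem_Bconf_of_isRectWithCellV {σ : Config K L} {r : Spin} {a b : ℕ}
    (hσ : ∀ v, σ v = 0 ∨ σ v = r) (h : IsRectWithCellV a b (zeroSet σ)) :
    σ ∈ Bconf K L a b 1 r 0 := by
  obtain ⟨x0, y0, v, hA, hv2, hv1⟩ := h
  obtain ⟨j, hj, hvj⟩ := mem_arc.mp hv2
  refine ⟨x0, y0, v.1, j, hv1, hj, ?_⟩
  rw [← coe_arc_prod_arc, barV_one, ← hvj, ← onSet_zeroSet hσ, hA]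
  simp

lemma mem_Bhat_of_isRectWithCellH {σ : Config K L} {r : Spin} {a b : ℕ}
    (hσ : ∀ v, σ v = 0 ∨ σ v = r) (h : IsRectWithCellH a b (zeroSet σ)) :
    σ ∈ Bhat K L a b 1 r 0 := by
  obtain ⟨x0, y0, v, hA, hv1, hv2⟩ := h
  obtain ⟨i, hi, hvi⟩ := mem_arc.mp hv1
  refine ⟨x0, y0, v.2, i, hv2, hi, ?_⟩
  rw [← coe_arc_prod_arc, barH_one, ← hvi, ← onSet_zeroSet hσ, hA]
  simp

end Configurations

theorem gate_property_one (K L : ℕ) [NeZero K] [NeZero L] (C : Couplings)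
    (hadm : Admissible K L C)
    (r : Spin) (hr : r = 1 ∨ r = 2) (ω : Path K L)
    (hfromto : ω.FromTo (const K L r) (const K L 0))
    (hspins : ω.OnlySpins 0 r) :
    H K L C (const K L 1) + Γstar C ≤ ω.height C ∧
    (ω.height C = H K L C (const K L 1) + Γstar C →
      ∃ n ≤ ω.len, ω.toFun n ∈ Wcrit K L C r) := by
  set ℓ := lstar C
  set F := fun k => zeroSet (ω.toFun k)
  have hH : ∀ k ≤ ω.len, H K L C (ω.toFun k) =
      H K L C (const K L 1) + excess (C.γ12 + C.γ1 / 2) C.γ1 (F k) :=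
    fun k hk => H_eq_H_const_one_add_excess C hadm.h2233 hadm.h1213 hr (hspins k hk)
  have hvolK := hadm.lstar_mul_sub_one_add_one_lt
  obtain ⟨T, hT, hFT, hafter⟩ := ω.exists_last_card_zeroSet_eq
    (by rcases hr with rfl | rfl <;> decide) hfromto (N := ℓ * (ℓ - 1))
    (by nlinarith [Nat.le_mul_of_pos_right K (NeZero.pos L)])
  have hFT1 : #(F (T + 1)) = ℓ * (ℓ - 1) + 1 :=
    le_antisymm (hFT ▸ ω.flipSeq_zeroSet.card_succ_le hT) (hafter _ (by omega) hT)
  refine ⟨?_, fun hheight => ?_⟩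
  · have hbarrier := barrier_le_excess (γ := C.γ1) hadm.γ12_add_pos.le (hFT1 ▸ hvolK)
      (hFT1 ▸ hvolK.trans_le hadm.hKL) hFT1
    have hheight := ω.le_height C hT
    rw [hH _ hT] at hheight
    rw [hadm.Γstar_eq_barrier]
    linarith
  · have hE : ∀ k ≤ ω.len, excess (C.γ12 + C.γ1 / 2) C.γ1 (F k) ≤
        barrier (C.γ12 + C.γ1 / 2) C.γ1 ℓ := fun k hk => by
      have := ω.le_height C hk
      rw [hheight, hH k hk, hadm.Γstar_eq_barrier] at this
      linarith
    have hFn : F ω.len = univ := by ext v; simp [F, hfromto.2, const]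
    refine ⟨T + 1, hT, ?_⟩
    rcases isRectWithCell_of_flipSeq ω.flipSeq_zeroSet hadm.two_le_lstar hadm.γ1_pos
      hadm.lstar_sub_one_mul_lt hadm.hK (hadm.hK.trans hadm.hKL) hFn hT hFT hafter hE with h | h
    · exact Or.inl (mem_Bconf_of_isRectWithCellV (hspins _ hT) h)
    · exact Or.inr (mem_Bhat_of_isRectWithCellH (hspins _ hT) h)

end GenPotts
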